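/- Let C be a monoidal category such that the identity functor of C admits a unital magma structure (μ, η), and suppose all idempotents in C split (C is idempotent complete). Then C has all finite coproducts. -/

import Mathlib

/-!
The magma structure makes every finite discrete diagram have a "weak colimit" whose
factorizations are natural: `𝟙_ C` with `η` for the empty diagram, and `A ⊗ B` with injections
`(ρ_ A).inv ≫ A ◁ η B`, `(λ_ B).inv ≫ η A ▷ B` and factorizations `(f ⊗ₘ g) ≫ μ` for a pair.
By naturality, the factorization of such a weak colimit through itself is idempotent, and the
object it splits off is a genuine colimit.
-/

open CategoryTheory CategoryTheory.Limits CategoryTheory.MonoidalCategory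

/-- A unital magma structure on the identity functor of a monoidal category: natural
families `μ_A : A ⊗ A ⟶ A` and `η_A : 𝟙_C ⟶ A` satisfying the two unit laws. -/
structure IdMagma (C : Type*) [Category C] [MonoidalCategory C] where
  μ : ∀ A : C, A ⊗ A ⟶ A
  η : ∀ A : C, 𝟙_ C ⟶ A
  μ_natural : ∀ {A B : C} (f : A ⟶ B), (f ⊗ₘ f) ≫ μ B = μ A ≫ f
  η_natural : ∀ {A B : C} (f : A ⟶ B), η A ≫ f = η B
  left_unit : ∀ A : C, (λ_ A).inv ≫ (η A ▷ A) ≫ μ A = 𝟙 A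
  right_unit : ∀ A : C, (ρ_ A).inv ≫ (A ◁ η A) ≫ μ A = 𝟙 A

namespace CategoryTheory.Limits

variable {C : Type*} [Category C] {J : Type*} [Category J] {F : J ⥤ C}

/-- Like `IsColimit`, but the factorizations `desc s` need not be unique; instead they are
natural in the cocone `s`. -/
structure NaturalWeakColimit (c : Cocone F) where
  desc : ∀ s : Cocone F, c.pt ⟶ s.pt
  fac : ∀ (s : Cocone F) (j : J), c.ι.app j ≫ desc s = s.ι.app j
  desc_eq_desc_comp : ∀ (s : Cocone F) (m : c.pt ⟶ s.pt),
    (∀ j, c.ι.app j ≫ m = s.ι.app j) → desc s = desc c ≫ m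

namespace NaturalWeakColimit

variable {c : Cocone F}

theorem desc_self_comp_desc_self (h : NaturalWeakColimit c) : h.desc c ≫ h.desc c = h.desc c :=
  (h.desc_eq_desc_comp c (h.desc c) (h.fac c)).symm

def isColimitExtend (h : NaturalWeakColimit c) {Y : C} (i : Y ⟶ c.pt) (r : c.pt ⟶ Y)
    (hir : i ≫ r = 𝟙 Y) (hri : r ≫ i = h.desc c) : IsColimit (c.extend r) where
  desc s := i ≫ h.desc s
  fac s j := by
    simp only [Cocone.extend_ι, NatTrans.comp_app, Functor.const_map_app, Category.assoc]
    rw [reassoc_of% hri, reassoc_of% h.fac c j, h.fac s j]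
  uniq s g hg := by
    have hs : h.desc s = h.desc c ≫ r ≫ g :=
      h.desc_eq_desc_comp s (r ≫ g) fun j => by simpa using hg j
    rw [hs, ← hri]
    simp only [Category.assoc]
    rw [reassoc_of% hir, reassoc_of% hir]

theorem hasColimit (h : NaturalWeakColimit c) [IsIdempotentComplete C] : HasColimit F := by
  obtain ⟨Y, i, r, hir, hri⟩ :=
    IsIdempotentComplete.idempotents_split c.pt (h.desc c) h.desc_self_comp_desc_self
  exact ⟨⟨_, h.isColimitExtend i r hir hri⟩⟩

end NaturalWeakColimit

end CategoryTheory.Limits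

namespace IdMagma

variable {C : Type*} [Category C] [MonoidalCategory C] (m : IdMagma C)

def unitCocone {J : Type*} [Category J] [IsEmpty J] (F : J ⥤ C) : Cocone F where
  pt := 𝟙_ C
  ι := { app := isEmptyElim, naturality := isEmptyElim }

def naturalWeakColimitUnitCocone {J : Type*} [Category J] [IsEmpty J] (F : J ⥤ C) :
    NaturalWeakColimit (unitCocone F) where
  desc s := m.η s.pt
  fac _ := isEmptyElim
  desc_eq_desc_comp _ g _ := (m.η_natural g).symm

theorem hasInitial (m : IdMagma C) [IsIdempotentComplete C] : HasInitial C :=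
  ⟨fun F => (m.naturalWeakColimitUnitCocone F).hasColimit⟩

def inl (A B : C) : A ⟶ A ⊗ B := (ρ_ A).inv ≫ (A ◁ m.η B)

def inr (A B : C) : B ⟶ A ⊗ B := (λ_ B).inv ≫ (m.η A ▷ B)

theorem inl_tensorHom_μ {A B X : C} (f : A ⟶ X) (g : B ⟶ X) :
    m.inl A B ≫ (f ⊗ₘ g) ≫ m.μ X = f := by
  calc m.inl A B ≫ (f ⊗ₘ g) ≫ m.μ X = (ρ_ A).inv ≫ (f ⊗ₘ (m.η B ≫ g)) ≫ m.μ X := by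
        simp [inl, ← id_tensorHom, tensorHom_comp_tensorHom_assoc]
    _ = f ≫ (ρ_ X).inv ≫ (X ◁ m.η X) ≫ m.μ X := by
        rw [m.η_natural, MonoidalCategory.tensorHom_def]; simp
    _ = f := by rw [m.right_unit, Category.comp_id]

theorem inr_tensorHom_μ {A B X : C} (f : A ⟶ X) (g : B ⟶ X) :
    m.inr A B ≫ (f ⊗ₘ g) ≫ m.μ X = g := by
  calc m.inr A B ≫ (f ⊗ₘ g) ≫ m.μ X = (λ_ B).inv ≫ ((m.η A ≫ f) ⊗ₘ g) ≫ m.μ X := by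
        simp [inr, ← tensorHom_id, tensorHom_comp_tensorHom_assoc]
    _ = g ≫ (λ_ X).inv ≫ (m.η X ▷ X) ≫ m.μ X := by
        rw [m.η_natural, tensorHom_def']; simp
    _ = g := by rw [m.left_unit, Category.comp_id]

theorem comp_tensorHom_comp_μ {A B X Y : C} (f : A ⟶ X) (g : B ⟶ X) (h : X ⟶ Y) :
    ((f ≫ h) ⊗ₘ (g ≫ h)) ≫ m.μ Y = ((f ⊗ₘ g) ≫ m.μ X) ≫ h := by
  rw [← tensorHom_comp_tensorHom_assoc, m.μ_natural, Category.assoc]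

def tensorCofan (A B : C) : BinaryCofan A B := BinaryCofan.mk (m.inl A B) (m.inr A B)

def naturalWeakColimitTensorCofan (A B : C) : NaturalWeakColimit (m.tensorCofan A B) where
  desc (s : BinaryCofan A B) := (s.inl ⊗ₘ s.inr) ≫ m.μ s.pt
  fac (s : BinaryCofan A B) := by
    rintro ⟨⟨⟩⟩
    · exact m.inl_tensorHom_μ s.inl s.inr
    · exact m.inr_tensorHom_μ s.inl s.inr
  desc_eq_desc_comp (s : BinaryCofan A B) (g : A ⊗ B ⟶ s.pt) hg := by
    have hl : m.inl A B ≫ g = s.inl := hg ⟨.left⟩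
    have hr : m.inr A B ≫ g = s.inr := hg ⟨.right⟩
    have key := m.comp_tensorHom_comp_μ (m.inl A B) (m.inr A B) g
    rw [hl, hr] at key
    exact key

theorem hasBinaryCoproducts (m : IdMagma C) [IsIdempotentComplete C] : HasBinaryCoproducts C :=
  @hasBinaryCoproducts_of_hasColimit_pair _ _ fun {A B} =>
    (m.naturalWeakColimitTensorCofan A B).hasColimit

end IdMagma

/-- If the identity functor of a monoidal category admits a unital magma structure and
idempotents split, then the category has all finite coproducts. -/
theorem hasFiniteCoproducts_of_idMagma {C : Type*} [Category C] [MonoidalCategory C]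
    (m : IdMagma C) [IsIdempotentComplete C] :
    HasFiniteCoproducts C := by
  have := m.hasInitial
  have := m.hasBinaryCoproducts
  exact hasFiniteCoproducts_of_has_binary_and_initial
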